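/- arXiv:1709.06156 — 7 statements merged into one kernel-verified Lean document; each statement's English description precedes it below -/
import Mathlib

section
/- Let $r_1(t) = c_1/(t+1)^{\delta_1}$ and $r_2(t) = c_2/(t+1)^{\delta_2}$ with $c_1, c_2 > 0$ and $0 < \delta_2 < \delta_1 < 1$. Then for any fixed nonnegative integer $j$, the sum $\sum_{k=j}^{t-1} \left(\prod_{l=k+1}^{t-1} (1 - r_2(l))\right) r_1(k)$ tends to $0$ as $t \to \infty$. -/
open Filter Finset Asymptotics Topology

/-!
Write `r₁ k = c1 / (k+1)^δ1`, `r₂ k = c2 / (k+1)^δ2`. The weights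
`(∏_{l=k+1}^{t-1} (1 - r₂ l)) * r₂ k`, `T ≤ k < t`, telescope to `1 - ∏_{l=T}^{t-1} (1 - r₂ l) ≤ 1`
once `0 ≤ r₂ ≤ 1` from `T` on. Since `δ2 < δ1`, `r₁ = o(r₂)`, so beyond a large `T` the tail of the
sum is at most `ε` times these weights. Each of the finitely many head terms `k < T` tends to `0`
because `∑ r₂ = ∞` (as `δ2 < 1`) forces `∏ (1 - r₂ l) ≤ exp (-∑ r₂ l) → 0`.
-/

theorem sum_Ico_prod_Ico_mul_one_sub {R : Type*} [CommRing R] (f : ℕ → R) (a b : ℕ) :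
    ∑ k ∈ Ico a b, (∏ l ∈ Ico (k + 1) b, f l) * (1 - f k) = 1 - ∏ l ∈ Ico a b, f l := by
  induction hn : b - a generalizing a with
  | zero => simp [Ico_eq_empty_of_le (Nat.sub_eq_zero_iff_le.mp hn)]
  | succ n ih =>
    have hab : a < b := by omega
    rw [sum_eq_sum_Ico_succ_bot hab, prod_eq_prod_Ico_succ_bot hab, ih (a + 1) (by omega)]
    ring

theorem prod_Ico_one_sub_le_exp_neg_sum {r : ℕ → ℝ} {a b : ℕ} (hr : ∀ l ∈ Ico a b, r l ≤ 1) :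
    ∏ l ∈ Ico a b, (1 - r l) ≤ Real.exp (-∑ l ∈ Ico a b, r l) := by
  rw [← sum_neg_distrib, Real.exp_sum]
  exact prod_le_prod (fun l hl => sub_nonneg.2 (hr l hl)) fun l _ => Real.one_sub_le_exp_neg _

theorem tendsto_prod_Ico_one_sub_zero {r : ℕ → ℝ} (hr : ∀ᶠ k in atTop, r k ≤ 1)
    (hdiv : Tendsto (fun n => ∑ l ∈ range n, r l) atTop atTop) (a : ℕ) :
    Tendsto (fun t => ∏ l ∈ Ico a t, (1 - r l)) atTop (𝓝 0) := by
  obtain ⟨T, hT⟩ := eventually_atTop.mp hr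
  set b := max a T
  have hr_tail : ∀ t, ∀ l ∈ Ico b t, r l ≤ 1 := fun t l hl =>
    hT l (le_trans (le_max_right _ _) (mem_Ico.mp hl).1)
  have hsum_tail : Tendsto (fun t => ∑ l ∈ Ico b t, r l) atTop atTop := by
    refine (tendsto_atTop_add_const_right _ (-∑ l ∈ range b, r l) hdiv).congr' ?_
    filter_upwards [eventually_ge_atTop b] with t ht
    rw [sum_Ico_eq_sub _ ht, sub_eq_add_neg]
  have htail : Tendsto (fun t => ∏ l ∈ Ico b t, (1 - r l)) atTop (𝓝 0) :=
    tendsto_of_tendsto_of_tendsto_of_le_of_le tendsto_const_nhds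
      (Real.tendsto_exp_atBot.comp (tendsto_neg_atTop_atBot.comp hsum_tail))
      (fun t => prod_nonneg fun l hl => sub_nonneg.2 (hr_tail t l hl))
      (fun t => prod_Ico_one_sub_le_exp_neg_sum (hr_tail t))
  have := htail.const_mul (∏ l ∈ Ico a b, (1 - r l))
  rw [mul_zero] at this
  refine this.congr' ?_
  filter_upwards [eventually_ge_atTop b] with t ht
  rw [prod_Ico_consecutive _ (le_max_left _ _) ht]

theorem abs_sum_Ico_prod_one_sub_mul_le {r₁ r₂ : ℕ → ℝ} {a b : ℕ} {c : ℝ} (hc : 0 ≤ c)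
    (hr₂ : ∀ k ∈ Ico a b, 0 ≤ r₂ k ∧ r₂ k ≤ 1) (hr₁ : ∀ k ∈ Ico a b, |r₁ k| ≤ c * r₂ k) :
    |∑ k ∈ Ico a b, (∏ l ∈ Ico (k + 1) b, (1 - r₂ l)) * r₁ k| ≤ c := by
  have hprod : ∀ k, a ≤ k → 0 ≤ ∏ l ∈ Ico k b, (1 - r₂ l) := fun k hk =>
    prod_nonneg fun l hl => sub_nonneg.2 (hr₂ l (by simp only [mem_Ico] at hl ⊢; omega)).2
  calc |∑ k ∈ Ico a b, (∏ l ∈ Ico (k + 1) b, (1 - r₂ l)) * r₁ k|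
      ≤ ∑ k ∈ Ico a b, (∏ l ∈ Ico (k + 1) b, (1 - r₂ l)) * |r₁ k| := by
        refine (abs_sum_le_sum_abs _ _).trans_eq (sum_congr rfl fun k hk => ?_)
        rw [abs_mul, abs_of_nonneg (hprod (k + 1) (by simp only [mem_Ico] at hk; omega))]
    _ ≤ ∑ k ∈ Ico a b, (∏ l ∈ Ico (k + 1) b, (1 - r₂ l)) * (c * r₂ k) := by
        gcongr with k hk
        · exact hprod (k + 1) (by simp only [mem_Ico] at hk; omega)
        · exact hr₁ k hk
    _ = c * (1 - ∏ l ∈ Ico a b, (1 - r₂ l)) := by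
        rw [← sum_Ico_prod_Ico_mul_one_sub (fun l => 1 - r₂ l), mul_sum]
        exact sum_congr rfl fun k _ => by ring
    _ ≤ c := mul_le_of_le_one_right hc (sub_le_self _ (hprod a le_rfl))

theorem tendsto_sum_Ico_prod_one_sub_mul_zero {r₁ r₂ : ℕ → ℝ}
    (hr₂ : ∀ᶠ k in atTop, 0 ≤ r₂ k ∧ r₂ k ≤ 1)
    (hdiv : Tendsto (fun n => ∑ l ∈ range n, r₂ l) atTop atTop) (h : r₁ =o[atTop] r₂)
    (j : ℕ) :
    Tendsto (fun t => ∑ k ∈ Ico j t, (∏ l ∈ Ico (k + 1) t, (1 - r₂ l)) * r₁ k)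
      atTop (𝓝 0) := by
  rw [NormedAddGroup.tendsto_nhds_zero]
  intro ε hε
  obtain ⟨T, hT⟩ := eventually_atTop.mp (hr₂.and (h.def (half_pos hε)))
  set b := max j T
  have hhead : Tendsto (fun t => ∑ k ∈ Ico j b, (∏ l ∈ Ico (k + 1) t, (1 - r₂ l)) * r₁ k)
      atTop (𝓝 0) := by
    simpa using tendsto_finsetSum (Ico j b) fun k _ =>
      (tendsto_prod_Ico_one_sub_zero (hr₂.mono fun _ h => h.2) hdiv (k + 1)).mul_const (r₁ k)
  filter_upwards [eventually_ge_atTop b,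
    NormedAddGroup.tendsto_nhds_zero.mp hhead _ (half_pos hε)] with t hbt hhead_t
  have htail := abs_sum_Ico_prod_one_sub_mul_le (a := b) (b := t) (half_pos hε).le
    (fun k hk => (hT k (le_trans (le_max_right _ _) (mem_Ico.mp hk).1)).1)
    (fun k hk => by
      have := (hT k (le_trans (le_max_right _ _) (mem_Ico.mp hk).1))
      simpa [abs_of_nonneg this.1.1] using this.2)
  rw [← sum_Ico_consecutive _ (le_max_left j T) hbt]
  calc _ ≤ _ := norm_add_le _ _
    _ < ε / 2 + ε / 2 := add_lt_add_of_lt_of_le hhead_t htail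
    _ = ε := add_halves ε

theorem isLittleO_const_div_rpow_atTop (c₁ : ℝ) {c₂ δ₁ δ₂ : ℝ} (hc₂ : c₂ ≠ 0) (hδ : δ₂ < δ₁) :
    (fun x : ℝ => c₁ / x ^ δ₁) =o[atTop] fun x => c₂ / x ^ δ₂ := by
  rw [isLittleO_iff_tendsto' (by
    filter_upwards [eventually_gt_atTop 0] with x hx h
    exact absurd h (div_ne_zero hc₂ (Real.rpow_pos_of_pos hx _).ne'))]
  have := (tendsto_rpow_neg_atTop (sub_pos.2 hδ)).const_mul (c₁ / c₂)
  rw [mul_zero] at this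
  refine this.congr' ?_
  filter_upwards [eventually_gt_atTop 0] with x hx
  rw [neg_sub, Real.rpow_sub hx]
  field_simp

theorem not_summable_const_div_natCast_add_one_rpow {c δ : ℝ} (hc : c ≠ 0) (hδ : δ ≤ 1) :
    ¬Summable fun k : ℕ => c / ((k : ℝ) + 1) ^ δ := by
  have h := (Real.summable_one_div_nat_add_rpow 1 δ).not.mpr hδ.not_gt
  contrapose! h
  refine (h.mul_left c⁻¹).congr fun k => ?_
  rw [abs_of_nonneg (by positivity)]
  field_simp

theorem stmt_0_general (c1 c2 δ1 δ2 : ℝ) (hc2 : 0 < c2)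
    (hδ2 : 0 < δ2) (hδ21 : δ2 < δ1) (hδ1 : δ1 < 1) (j : ℕ) :
    Tendsto (fun t : ℕ =>
      ∑ k ∈ Finset.Icc j (t - 1),
        (∏ l ∈ Finset.Icc (k + 1) (t - 1), (1 - c2 / ((l : ℝ) + 1) ^ δ2)) *
          (c1 / ((k : ℝ) + 1) ^ δ1))
      atTop (nhds 0) := by
  have hnat : Tendsto (fun k : ℕ => (k : ℝ) + 1) atTop atTop :=
    tendsto_atTop_add_const_right _ 1 tendsto_natCast_atTop_atTop
  have hr₂_nonneg (k : ℕ) : 0 ≤ c2 / ((k : ℝ) + 1) ^ δ2 := by positivity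
  have hr₂_lim : Tendsto (fun k : ℕ => c2 / ((k : ℝ) + 1) ^ δ2) atTop (𝓝 0) :=
    tendsto_const_nhds.div_atTop ((tendsto_rpow_atTop hδ2).comp hnat)
  have hr₂ : ∀ᶠ k : ℕ in atTop, 0 ≤ c2 / ((k : ℝ) + 1) ^ δ2 ∧ c2 / ((k : ℝ) + 1) ^ δ2 ≤ 1 :=
    (hr₂_lim.eventually_le_const one_pos).mono fun k hk => ⟨hr₂_nonneg k, hk⟩
  have hdiv := (not_summable_iff_tendsto_nat_atTop_of_nonneg hr₂_nonneg).mp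
    (not_summable_const_div_natCast_add_one_rpow hc2.ne' (hδ21.trans hδ1).le)
  have h₁₂ := (isLittleO_const_div_rpow_atTop c1 hc2.ne' hδ21).comp_tendsto hnat
  refine (tendsto_sum_Ico_prod_one_sub_mul_zero hr₂ hdiv h₁₂ j).congr' ?_
  -- `Icc _ (t - 1) = Ico _ t` fails only at `t = 0`, where `t - 1` truncates to `0`
  filter_upwards [eventually_ge_atTop 1] with t ht
  obtain ⟨s, rfl⟩ := Nat.exists_eq_add_of_le' ht
  simp only [Function.comp_apply, Nat.add_sub_cancel, Ico_add_one_right_eq_Icc]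

theorem stmt_0 (c1 c2 δ1 δ2 : ℝ) (hc1 : 0 < c1) (hc2 : 0 < c2)
    (hδ2 : 0 < δ2) (hδ21 : δ2 < δ1) (hδ1 : δ1 < 1) (j : ℕ) :
    Tendsto (fun t : ℕ =>
      ∑ k ∈ Finset.Icc j (t - 1),
        (∏ l ∈ Finset.Icc (k + 1) (t - 1), (1 - c2 / ((l : ℝ) + 1) ^ δ2)) *
          (c1 / ((k : ℝ) + 1) ^ δ1))
      atTop (nhds 0) :=
  stmt_0_general c1 c2 δ1 δ2 hc2 hδ2 hδ21 hδ1 j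
end

section
/- Let $r_1(t) = c_1/(t+1)^{\delta}$ and $r_2(t) = c_2/(t+1)^{\delta}$ with $c_1, c_2 > 0$ and $0 < \delta < 1$ (i.e., the same exponent). Then there exists a constant $B > 0$ such that for all sufficiently large nonnegative integers $j < t$, $0 \le \sum_{k=j}^{t-1} \left(\prod_{l=k+1}^{t-1} (1 - r_2(l))\right) r_1(k) \le B$, where $B$ can be chosen independently of $t$ and $j$. -/
open Filter Finset

/-!
Writing `r₂ = c₂ / (t+1)^δ`, the summand is `(c₁/c₂)` times `(∏_{l>k} (1 - r₂ l)) * r₂ k`,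
and these terms telescope: their sum over `j ≤ k ≤ m` is `1 - ∏_{l=j}^{m} (1 - r₂ l)`.
Since `r₂ l → 0`, eventually `0 ≤ r₂ l ≤ 1`, so this product lies in `[0, 1]` and the sum is
between `0` and `B = c₁/c₂`.
-/

theorem sum_prod_one_sub_mul_eq_one_sub_prod {R : Type*} [CommRing R] (r : ℕ → R) (j m : ℕ) :
    ∑ k ∈ Icc j m, (∏ l ∈ Icc (k + 1) m, (1 - r l)) * r k = 1 - ∏ l ∈ Icc j m, (1 - r l) := by
  induction hn : m + 1 - j generalizing j with
  | zero => simp [Icc_eq_empty_of_lt (show m < j by omega)]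
  | succ n ih =>
    have hjm : j ≤ m := by omega
    rw [Icc_eq_cons_Ioc hjm, sum_cons, prod_cons, ← Icc_add_one_left_eq_Ioc, ih (j + 1) (by omega)]
    ring

theorem sum_prod_one_sub_mul_mem_Icc {R : Type*} [CommRing R] [PartialOrder R]
    [IsOrderedRing R] (r : ℕ → R) (j m : ℕ) (hr : ∀ l ∈ Icc j m, 0 ≤ r l ∧ r l ≤ 1) :
    ∑ k ∈ Icc j m, (∏ l ∈ Icc (k + 1) m, (1 - r l)) * r k ∈ Set.Icc 0 1 := by
  rw [sum_prod_one_sub_mul_eq_one_sub_prod]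
  have h0 : ∀ l ∈ Icc j m, 0 ≤ 1 - r l := fun l hl => sub_nonneg.mpr (hr l hl).2
  have h1 : ∀ l ∈ Icc j m, 1 - r l ≤ 1 := fun l hl => sub_le_self _ (hr l hl).1
  constructor
  · exact sub_nonneg.mpr (prod_le_one h0 h1)
  · exact sub_le_self _ (prod_nonneg h0)

theorem eventually_div_rpow_le_one {c δ : ℝ} (hδ : 0 < δ) :
    ∀ᶠ l : ℕ in atTop, c / ((l : ℝ) + 1) ^ δ ≤ 1 := by
  have hden : Tendsto (fun l : ℕ => ((l : ℝ) + 1) ^ δ) atTop atTop :=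
    (tendsto_rpow_atTop hδ).comp (tendsto_atTop_add_const_right _ 1 tendsto_natCast_atTop_atTop)
  exact (tendsto_const_nhds.div_atTop hden).eventually_le_const one_pos

theorem stmt_1_general (c1 c2 δ : ℝ) (hc1 : 0 < c1) (hc2 : 0 < c2)
    (hδ : 0 < δ) :
    ∃ B : ℝ, 0 < B ∧ ∃ T : ℕ, ∀ j t : ℕ, T ≤ j → j < t →
      0 ≤ (∑ k ∈ Finset.Icc j (t - 1),
            (∏ l ∈ Finset.Icc (k + 1) (t - 1), (1 - c2 / ((l : ℝ) + 1) ^ δ)) *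
              (c1 / ((k : ℝ) + 1) ^ δ)) ∧
      (∑ k ∈ Finset.Icc j (t - 1),
            (∏ l ∈ Finset.Icc (k + 1) (t - 1), (1 - c2 / ((l : ℝ) + 1) ^ δ)) *
              (c1 / ((k : ℝ) + 1) ^ δ)) ≤ B := by
  obtain ⟨T, hT⟩ := eventually_atTop.mp (eventually_div_rpow_le_one (c := c2) hδ)
  refine ⟨c1 / c2, div_pos hc1 hc2, T, fun j t hj _ => ?_⟩
  set r : ℕ → ℝ := fun l => c2 / ((l : ℝ) + 1) ^ δ
  have hr : ∀ l ∈ Icc j (t - 1), 0 ≤ r l ∧ r l ≤ 1 := fun l hl =>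
    ⟨by positivity, hT l (hj.trans (mem_Icc.mp hl).1)⟩
  have hsum : ∑ k ∈ Icc j (t - 1), (∏ l ∈ Icc (k + 1) (t - 1), (1 - r l)) * (c1 / ((k : ℝ) + 1) ^ δ)
      = c1 / c2 * ∑ k ∈ Icc j (t - 1), (∏ l ∈ Icc (k + 1) (t - 1), (1 - r l)) * r k := by
    rw [mul_sum]
    refine sum_congr rfl fun k _ => ?_
    simp only [r]
    field_simp
  obtain ⟨hS0, hS1⟩ := sum_prod_one_sub_mul_mem_Icc r j (t - 1) hr
  rw [hsum]
  have hB : 0 ≤ c1 / c2 := (div_pos hc1 hc2).le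
  exact ⟨mul_nonneg hB hS0, mul_le_of_le_one_right hB hS1⟩

theorem stmt_1 (c1 c2 δ : ℝ) (hc1 : 0 < c1) (hc2 : 0 < c2)
    (hδ : 0 < δ) (hδ1 : δ < 1) :
    ∃ B : ℝ, 0 < B ∧ ∃ T : ℕ, ∀ j t : ℕ, T ≤ j → j < t →
      0 ≤ (∑ k ∈ Finset.Icc j (t - 1),
            (∏ l ∈ Finset.Icc (k + 1) (t - 1), (1 - c2 / ((l : ℝ) + 1) ^ δ)) *
              (c1 / ((k : ℝ) + 1) ^ δ)) ∧
      (∑ k ∈ Finset.Icc j (t - 1),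
            (∏ l ∈ Finset.Icc (k + 1) (t - 1), (1 - c2 / ((l : ℝ) + 1) ^ δ)) *
              (c1 / ((k : ℝ) + 1) ^ δ)) ≤ B :=
  stmt_1_general c1 c2 δ hc1 hc2 hδ
end

section
/- Consider the scalar recursion $v_{t+1} = (1 - r_2(t)) v_t + r_1(t)$ with $r_1(t) = c_1/(t+1)^{\delta_1}$, $r_2(t) = c_2/(t+1)^{\delta_2}$, $c_1, c_2 > 0$, and $0 < \delta_2 < \delta_1 < 1$. Then $\lim_{t\to\infty} (t+1)^{\delta_0} v_t = 0$ for all $0 \le \delta_0 < \delta_1 - \delta_2$ and all initial conditions $v_0 \in \mathbb{R}$. -/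
/-!
Fix `δ` with `δ0 < δ < δ1 - δ2` and rescale to `u t = (t + 1) ^ δ * v t`. Since `r₂` decays more
slowly than `1 / t`, the growth factor `((t + 2) / (t + 1)) ^ δ ≤ 1 + 1 / (t + 1)` of the weight costs
at most half of the contraction `1 - r₂(t)`, while the weighted forcing `(t + 2) ^ δ r₁(t)` is
`O(r₂(t))` because `δ + δ2 < δ1`. So `u` obeys `|u (t+1)| ≤ (1 - p t) |u t| + p t K` with
`p = r₂ / 2`, hence stays bounded, and `(t + 1) ^ δ0 * v t = (t + 1) ^ (δ0 - δ) * u t → 0`.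
-/

open Filter

theorem abs_le_max_of_contraction {u p : ℕ → ℝ} {K : ℝ} {T : ℕ}
    (hp : ∀ t ≥ T, 0 ≤ p t ∧ p t ≤ 1)
    (hstep : ∀ t ≥ T, |u (t + 1)| ≤ (1 - p t) * |u t| + p t * K) :
    ∀ t ≥ T, |u t| ≤ max |u T| K := by
  intro t ht
  induction t, ht using Nat.le_induction with
  | base => exact le_max_left _ _
  | succ t ht ih =>
    obtain ⟨hp0, hp1⟩ := hp t ht
    calc |u (t + 1)| ≤ (1 - p t) * |u t| + p t * K := hstep t ht
      _ ≤ (1 - p t) * max |u T| K + p t * max |u T| K := by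
          gcongr
          exact le_max_right _ _
      _ = max |u T| K := by ring

theorem isBoundedUnder_norm_of_contraction {u p : ℕ → ℝ} {K : ℝ}
    (hp : ∀ᶠ t in atTop, 0 ≤ p t ∧ p t ≤ 1)
    (hstep : ∀ᶠ t in atTop, |u (t + 1)| ≤ (1 - p t) * |u t| + p t * K) :
    IsBoundedUnder (· ≤ ·) atTop fun t => ‖u t‖ := by
  obtain ⟨T, hT⟩ := eventually_atTop.1 (hp.and hstep)
  refine isBoundedUnder_of_eventually_le (a := max |u T| K) ?_
  filter_upwards [eventually_ge_atTop T] with t ht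
  exact abs_le_max_of_contraction (fun t ht => (hT t ht).1) (fun t ht => (hT t ht).2) t ht

namespace Real

variable {s δ : ℝ}

theorem add_one_rpow_le (hs : 0 < s) (hδ : δ ≤ 1) : (s + 1) ^ δ ≤ (1 + s⁻¹) * s ^ δ := by
  have hsplit : s + 1 = (1 + s⁻¹) * s := by field_simp
  have hbase : 1 ≤ 1 + s⁻¹ := by simp [hs.le]
  rw [hsplit, mul_rpow (by linarith) hs.le]
  gcongr
  exact rpow_le_self_of_one_le hbase hδ

theorem one_add_inv_mul_one_sub_le {r : ℝ} (hs : 0 < s) (hr : 0 ≤ r) (hsr : 2 ≤ s * r) :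
    (1 + s⁻¹) * (1 - r) ≤ 1 - r / 2 := by
  have hinv : s⁻¹ ≤ r / 2 := by
    rw [inv_le_iff_one_le_mul₀ hs]
    linarith
  nlinarith [mul_nonneg (inv_nonneg.2 hs.le) hr]

theorem abs_add_one_rpow_mul_step_le {r f x : ℝ} (hs : 0 < s) (hδ : δ ≤ 1) (hr0 : 0 ≤ r)
    (hr1 : r ≤ 1) (hsr : 2 ≤ s * r) (hf : 0 ≤ f) :
    |(s + 1) ^ δ * ((1 - r) * x + f)| ≤ (1 - r / 2) * |s ^ δ * x| + (s + 1) ^ δ * f := by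
  have hw : 0 ≤ (s + 1) ^ δ := by positivity
  have hr1' : 0 ≤ 1 - r := by linarith
  calc |(s + 1) ^ δ * ((1 - r) * x + f)| = (s + 1) ^ δ * |(1 - r) * x + f| := by
        rw [abs_mul, abs_of_nonneg hw]
    _ ≤ (s + 1) ^ δ * ((1 - r) * |x| + f) := by
        gcongr
        calc |(1 - r) * x + f| ≤ |(1 - r) * x| + |f| := abs_add_le _ _
          _ = (1 - r) * |x| + f := by rw [abs_mul, abs_of_nonneg hr1', abs_of_nonneg hf]
    _ = (s + 1) ^ δ * (1 - r) * |x| + (s + 1) ^ δ * f := by ring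
    _ ≤ (1 + s⁻¹) * s ^ δ * (1 - r) * |x| + (s + 1) ^ δ * f := by
        gcongr
        exact add_one_rpow_le hs hδ
    _ = (1 + s⁻¹) * (1 - r) * (s ^ δ * |x|) + (s + 1) ^ δ * f := by ring
    _ ≤ (1 - r / 2) * (s ^ δ * |x|) + (s + 1) ^ δ * f := by
        gcongr
        exact one_add_inv_mul_one_sub_le hs hr0 hsr
    _ = (1 - r / 2) * |s ^ δ * x| + (s + 1) ^ δ * f := by
        rw [abs_mul, abs_of_nonneg (by positivity : 0 ≤ s ^ δ)]

theorem add_one_rpow_div_rpow_le {δ₁ δ₂ : ℝ} (hs : 1 ≤ s) (hδ : δ ≤ 1) (hδδ : δ + δ₂ ≤ δ₁) :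
    (s + 1) ^ δ / s ^ δ₁ ≤ 2 / s ^ δ₂ := by
  have hs0 : 0 < s := by linarith
  have hgrowth : (s + 1) ^ δ ≤ 2 * s ^ δ := by
    refine (add_one_rpow_le hs0 hδ).trans ?_
    gcongr
    linarith [inv_le_one_of_one_le₀ hs]
  calc (s + 1) ^ δ / s ^ δ₁ ≤ 2 * s ^ δ / s ^ δ₁ := by gcongr
    _ = 2 * s ^ (δ - δ₁) := by rw [rpow_sub hs0]; ring
    _ ≤ 2 * s ^ (-δ₂) := by gcongr; linarith
    _ = 2 / s ^ δ₂ := by rw [rpow_neg hs0.le]; ring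

theorem abs_add_one_rpow_mul_recursion_le {δ₁ δ₂ c₁ c₂ x : ℝ} (hc₁ : 0 ≤ c₁) (hc₂ : 0 < c₂)
    (hs : 1 ≤ s) (hδ : δ ≤ 1) (hδδ : δ + δ₂ ≤ δ₁) (hr1 : c₂ / s ^ δ₂ ≤ 1)
    (hsr : 2 ≤ s * (c₂ / s ^ δ₂)) :
    |(s + 1) ^ δ * ((1 - c₂ / s ^ δ₂) * x + c₁ / s ^ δ₁)| ≤
      (1 - c₂ / s ^ δ₂ / 2) * |s ^ δ * x| + c₂ / s ^ δ₂ / 2 * (4 * c₁ / c₂) := by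
  have hs0 : 0 < s := by linarith
  refine (abs_add_one_rpow_mul_step_le hs0 hδ (by positivity) hr1 hsr (by positivity)).trans
    (add_le_add_right ?_ _)
  calc (s + 1) ^ δ * (c₁ / s ^ δ₁) = c₁ * ((s + 1) ^ δ / s ^ δ₁) := by ring
    _ ≤ c₁ * (2 / s ^ δ₂) := mul_le_mul_of_nonneg_left (add_one_rpow_div_rpow_le hs hδ hδδ) hc₁
    _ = c₂ / s ^ δ₂ / 2 * (4 * c₁ / c₂) := by field_simp; ring

theorem eventually_div_rpow_le_one {c : ℝ} (hδ : 0 < δ) : ∀ᶠ s in atTop, c / s ^ δ ≤ 1 := by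
  filter_upwards [(tendsto_rpow_atTop hδ).eventually_ge_atTop c, eventually_gt_atTop 0]
    with s hs hs0
  exact div_le_one_of_le₀ hs (by positivity)

theorem eventually_two_le_mul_div_rpow {c : ℝ} (hc : 0 < c) (hδ : δ < 1) :
    ∀ᶠ s in atTop, 2 ≤ s * (c / s ^ δ) := by
  have hgrow := (tendsto_rpow_atTop (sub_pos.2 hδ)).const_mul_atTop hc
  filter_upwards [hgrow.eventually_ge_atTop 2, eventually_gt_atTop 0] with s hs hs0
  rwa [rpow_sub hs0, rpow_one, mul_div_assoc', mul_comm, ← mul_div_assoc'] at hs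

end Real

theorem stmt_2_general (c1 c2 δ1 δ2 : ℝ) (hc1 : 0 < c1) (hc2 : 0 < c2)
    (hδ2 : 0 < δ2) (hδ21 : δ2 < δ1) (hδ1 : δ1 < 1)
    (v : ℕ → ℝ)
    (hrec : ∀ t : ℕ, v (t + 1) =
      (1 - c2 / ((t : ℝ) + 1) ^ δ2) * v t + c1 / ((t : ℝ) + 1) ^ δ1)
    (δ0 : ℝ) (hδ0' : δ0 < δ1 - δ2) :
    Tendsto (fun t : ℕ => ((t : ℝ) + 1) ^ δ0 * v t) atTop (nhds 0) := by
  obtain ⟨δ, hδ0δ, hδδ⟩ := exists_between hδ0'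
  have hbase : Tendsto (fun t : ℕ => (t : ℝ) + 1) atTop atTop :=
    tendsto_atTop_add_const_right _ 1 tendsto_natCast_atTop_atTop
  set u : ℕ → ℝ := fun t => ((t : ℝ) + 1) ^ δ * v t with hu
  have hbounded : IsBoundedUnder (· ≤ ·) atTop fun t => ‖u t‖ := by
    have hr1 := hbase.eventually (Real.eventually_div_rpow_le_one (c := c2) hδ2)
    have hsr := hbase.eventually (Real.eventually_two_le_mul_div_rpow hc2 (hδ21.trans hδ1))
    refine isBoundedUnder_norm_of_contraction (p := fun t => c2 / ((t : ℝ) + 1) ^ δ2 / 2)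
      (K := 4 * c1 / c2) ?_ ?_
    · filter_upwards [hr1] with t ht
      exact ⟨by positivity, by linarith⟩
    · filter_upwards [hr1, hsr] with t hr1 hsr
      have hcast : ((t + 1 : ℕ) : ℝ) + 1 = ((t : ℝ) + 1) + 1 := by push_cast; ring
      simp only [hu, hcast, hrec t]
      exact Real.abs_add_one_rpow_mul_recursion_le hc1.le hc2 (by simp) (by linarith)
        (by linarith) hr1 hsr
  have hdecay : Tendsto (fun t : ℕ => ((t : ℝ) + 1) ^ (δ0 - δ)) atTop (nhds 0) := by
    have h := (tendsto_rpow_neg_atTop (by linarith : 0 < δ - δ0)).comp hbase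
    rwa [neg_sub] at h
  refine (hdecay.zero_mul_isBoundedUnder_le hbounded).congr fun t => ?_
  rw [← mul_assoc, ← Real.rpow_add (by positivity), sub_add_cancel]

theorem stmt_2 (c1 c2 δ1 δ2 : ℝ) (hc1 : 0 < c1) (hc2 : 0 < c2)
    (hδ2 : 0 < δ2) (hδ21 : δ2 < δ1) (hδ1 : δ1 < 1)
    (v : ℕ → ℝ)
    (hrec : ∀ t : ℕ, v (t + 1) =
      (1 - c2 / ((t : ℝ) + 1) ^ δ2) * v t + c1 / ((t : ℝ) + 1) ^ δ1)
    (δ0 : ℝ) (hδ0 : 0 ≤ δ0) (hδ0' : δ0 < δ1 - δ2) :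
    Tendsto (fun t : ℕ => ((t : ℝ) + 1) ^ δ0 * v t) atTop (nhds 0) :=
  stmt_2_general c1 c2 δ1 δ2 hc1 hc2 hδ2 hδ21 hδ1 v hrec δ0 hδ0'
end

section
/- Consider the scalar recursion $v_{t+1} = (1 - c_3 r_2(t) + c_4 r_1(t)) v_t + c_5 r_1(t)$ where $r_1(t) = c_1/(t+1)^{\delta_1}$, $r_2(t) = c_2/(t+1)^{\delta_2}$, $c_1,\dots,c_5 > 0$, and $0 < \delta_2 < \delta_1 < 1$. Then $\lim_{t\to\infty} (t+1)^{\delta_0} v_t = 0$ for all $0 \le \delta_0 < \delta_1 - \delta_2$ and all initial conditions $v_0 \in \mathbb{R}$. -/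
/-!
Write `a t = c3 c2 / (t+1)^δ2` and `b t = c4 c1 / (t+1)^δ1`. Since `δ2 < δ1` and `δ2 < 1`, the net
contraction `q t = a t - b t` eventually dominates both `b t` and `1 / (t+1)`, and the forcing term
`c5 c1 / (t+1)^δ1` is `(t+1)^(-(δ1-δ2))` times a fixed multiple of `q t`. Hence `M (t+1)^(-(δ1-δ2))`
is eventually a supersolution of `|v (t+1)| ≤ (1 - q t) |v t| + forcing` for `M` large: by Bernoulli's
inequality for negative exponents it loses at most a factor `1 - (δ1-δ2)/(t+1)` per step. So
`v t = O((t+1)^(-(δ1-δ2)))`, and `(t+1)^δ0 v t → 0` for every `δ0 < δ1 - δ2`.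
-/

open Filter Asymptotics Topology

theorem tendsto_natCast_add_one_atTop : Tendsto (fun t : ℕ => (t : ℝ) + 1) atTop atTop :=
  tendsto_natCast_atTop_atTop.atTop_add tendsto_const_nhds

theorem one_add_mul_self_le_rpow_one_add_of_nonpos {s : ℝ} (hs : -1 < s) {p : ℝ} (hp : p ≤ 0) :
    1 + p * s ≤ (1 + s) ^ p := by
  have h1s : 0 < 1 + s := by linarith
  have hlog : Real.log (1 + s) ≤ s := by linarith [Real.log_le_sub_one_of_pos h1s]
  calc 1 + p * s ≤ 1 + Real.log (1 + s) * p := by nlinarith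
    _ ≤ Real.exp (Real.log (1 + s) * p) := by linarith [Real.add_one_le_exp (Real.log (1 + s) * p)]
    _ = (1 + s) ^ p := (Real.rpow_def_of_pos h1s p).symm

theorem rpow_neg_mul_one_sub_div_le {P γ : ℝ} (hP : 0 < P) (hγ : 0 ≤ γ) :
    P ^ (-γ) * (1 - γ / P) ≤ (P + 1) ^ (-γ) := by
  have hbern := one_add_mul_self_le_rpow_one_add_of_nonpos
    (by linarith [one_div_pos.2 hP] : -1 < 1 / P) (neg_nonpos.2 hγ)
  rw [show P + 1 = P * (1 + 1 / P) by field_simp, Real.mul_rpow hP.le (by positivity)]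
  calc P ^ (-γ) * (1 - γ / P) = P ^ (-γ) * (1 + -γ * (1 / P)) := by ring
    _ ≤ P ^ (-γ) * (1 + 1 / P) ^ (-γ) := by gcongr

theorem le_of_recurrence_le_of_supersolution {x s k c : ℕ → ℝ} {T : ℕ}
    (hk : ∀ t ≥ T, 0 ≤ k t) (hx : ∀ t ≥ T, x (t + 1) ≤ k t * x t + c t)
    (hs : ∀ t ≥ T, k t * s t + c t ≤ s (t + 1)) (hT : x T ≤ s T) :
    ∀ t ≥ T, x t ≤ s t := by
  intro t ht
  induction t, ht using Nat.le_induction with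
  | base => exact hT
  | succ t ht ih =>
    calc x (t + 1) ≤ k t * x t + c t := hx t ht
      _ ≤ k t * s t + c t := by gcongr; exact hk t ht
      _ ≤ s (t + 1) := hs t ht

/-- Half of the contraction `q` pays for the decay `1 - γ / P` of `P ^ (-γ)`, the other half for
the forcing term. -/
theorem one_sub_mul_rpow_neg_add_le {P γ q K M : ℝ} (hP : 0 < P) (hγ : 0 ≤ γ) (hK : 0 ≤ K)
    (hKM : 2 * K ≤ M) (hq : 2 * γ / P ≤ q) :
    (1 - q) * (M * P ^ (-γ)) + K * q * P ^ (-γ) ≤ M * (P + 1) ^ (-γ) := by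
  have hγP : 0 ≤ γ / P := by positivity
  have hgain : K * q ≤ M * (q - γ / P) := by
    have : γ / P ≤ q / 2 := by rw [mul_div_assoc] at hq; linarith
    nlinarith
  calc (1 - q) * (M * P ^ (-γ)) + K * q * P ^ (-γ)
      ≤ (1 - q) * (M * P ^ (-γ)) + M * (q - γ / P) * P ^ (-γ) := by gcongr
    _ = M * (P ^ (-γ) * (1 - γ / P)) := by ring
    _ ≤ M * (P + 1) ^ (-γ) := by gcongr; exacts [by linarith, rpow_neg_mul_one_sub_div_le hP hγ]

theorem exists_eventually_le_mul_rpow_neg_of_recurrence {x q : ℕ → ℝ} {γ K : ℝ}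
    (hγ : 0 ≤ γ) (hK : 0 ≤ K) (hq1 : ∀ᶠ t : ℕ in atTop, q t ≤ 1)
    (hq : ∀ᶠ t : ℕ in atTop, 2 * γ / ((t : ℝ) + 1) ≤ q t)
    (hx : ∀ᶠ t : ℕ in atTop, x (t + 1) ≤ (1 - q t) * x t + K * q t * ((t : ℝ) + 1) ^ (-γ)) :
    ∃ M, ∀ᶠ t : ℕ in atTop, x t ≤ M * ((t : ℝ) + 1) ^ (-γ) := by
  obtain ⟨T, hT⟩ := eventually_atTop.1 (hq1.and (hq.and hx))
  set M := max (2 * K) (x T * ((T : ℝ) + 1) ^ γ)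
  refine ⟨M, eventually_atTop.2 ⟨T, le_of_recurrence_le_of_supersolution
    (fun t ht => sub_nonneg.2 (hT t ht).1) (fun t ht => (hT t ht).2.2) (fun t ht => ?_) ?_⟩⟩
  · push_cast
    exact one_sub_mul_rpow_neg_add_le (by positivity) hγ hK (le_max_left _ _) (hT t ht).2.1
  · rw [Real.rpow_neg (by positivity), ← div_eq_mul_inv, le_div_iff₀ (by positivity)]
    exact le_max_right _ _

theorem isLittleO_inv_rpow_natCast_add_one {α β : ℝ} (h : α < β) :
    (fun t : ℕ => (((t : ℝ) + 1) ^ β)⁻¹) =o[atTop] fun t => (((t : ℝ) + 1) ^ α)⁻¹ := by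
  have hreal : (fun x : ℝ => (x ^ β)⁻¹) =o[atTop] fun x => (x ^ α)⁻¹ := by
    rw [isLittleO_iff_tendsto']
    · refine (tendsto_rpow_neg_atTop (sub_pos.2 h)).congr' ?_
      filter_upwards [eventually_gt_atTop 0] with x hx
      rw [inv_div_inv, ← Real.rpow_sub hx, neg_sub]
    · filter_upwards [eventually_gt_atTop 0] with x hx h0
      exact absurd h0 (by positivity)
  exact hreal.comp_tendsto tendsto_natCast_add_one_atTop

theorem eventually_div_rpow_add_div_le {δ1 δ2 ε : ℝ} (hδ21 : δ2 < δ1) (hδ2 : δ2 < 1)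
    (hε : 0 < ε) (B C : ℝ) :
    ∀ᶠ t : ℕ in atTop, B / ((t : ℝ) + 1) ^ δ1 + C / ((t : ℝ) + 1) ≤ ε / ((t : ℝ) + 1) ^ δ2 := by
  have ho := ((isLittleO_inv_rpow_natCast_add_one hδ21).const_mul_left B).add
    ((isLittleO_inv_rpow_natCast_add_one hδ2).const_mul_left C)
  filter_upwards [ho.bound hε] with t ht
  rw [Real.norm_eq_abs, Real.norm_of_nonneg (by positivity), Real.rpow_one] at ht
  simpa only [div_eq_mul_inv] using (le_abs_self _).trans ht

theorem abs_one_sub_mul_add_le {q x e f : ℝ} (hq : q ≤ 1) (he : 0 ≤ e) (hef : e ≤ f) :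
    |(1 - q) * x + e| ≤ (1 - q) * |x| + f :=
  calc |(1 - q) * x + e| ≤ |(1 - q) * x| + |e| := abs_add_le _ _
    _ = (1 - q) * |x| + e := by rw [abs_mul, abs_of_nonneg (sub_nonneg.2 hq), abs_of_nonneg he]
    _ ≤ (1 - q) * |x| + f := by gcongr

theorem isBigO_rpow_neg_of_recurrence {c1 c2 c3 c4 c5 δ1 δ2 : ℝ}
    (hc1 : 0 < c1) (hc2 : 0 < c2) (hc3 : 0 < c3) (hc4 : 0 < c4) (hc5 : 0 < c5)
    (hδ2 : 0 < δ2) (hδ21 : δ2 < δ1) (hδ1 : δ1 < 1) {v : ℕ → ℝ}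
    (hrec : ∀ t : ℕ, v (t + 1) =
      (1 - c3 * (c2 / ((t : ℝ) + 1) ^ δ2) + c4 * (c1 / ((t : ℝ) + 1) ^ δ1)) * v t
        + c5 * (c1 / ((t : ℝ) + 1) ^ δ1)) :
    v =O[atTop] fun t : ℕ => ((t : ℝ) + 1) ^ (-(δ1 - δ2)) := by
  set γ := δ1 - δ2
  set a : ℕ → ℝ := fun t => c3 * (c2 / ((t : ℝ) + 1) ^ δ2) with ha
  set b : ℕ → ℝ := fun t => c4 * (c1 / ((t : ℝ) + 1) ^ δ1)
  set K := 2 * c5 * c1 / (c3 * c2)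
  have hγ0 : 0 < γ := sub_pos.2 hδ21
  have ha0 (t : ℕ) : 0 ≤ a t := by positivity
  have hb0 (t : ℕ) : 0 ≤ b t := by positivity
  have hdom : ∀ᶠ t : ℕ in atTop, b t + 2 * γ / ((t : ℝ) + 1) ≤ a t / 2 := by
    filter_upwards [eventually_div_rpow_add_div_le hδ21 (hδ21.trans hδ1)
      (by positivity : 0 < c3 * c2 / 2) (c4 * c1) (2 * γ)] with t ht
    convert ht using 1 <;> ring
  have hsmall : ∀ᶠ t : ℕ in atTop, a t ≤ 1 := by
    have : Tendsto a atTop (𝓝 (c3 * 0)) :=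
      (tendsto_const_nhds.div_atTop ((tendsto_rpow_atTop hδ2).comp
        tendsto_natCast_add_one_atTop)).const_mul c3
    exact this.eventually_le_const (by simp)
  obtain ⟨M, hM⟩ := exists_eventually_le_mul_rpow_neg_of_recurrence (x := fun t => |v t|)
    (q := a - b) (γ := γ) (K := K) hγ0.le (by positivity)
    (by filter_upwards [hsmall] with t ht; simp only [Pi.sub_apply]; linarith [hb0 t])
    (by
      filter_upwards [hdom] with t ht
      have : 0 ≤ 2 * γ / ((t : ℝ) + 1) := by positivity
      simp only [Pi.sub_apply]; linarith [ha0 t])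
    (by
      filter_upwards [hsmall, hdom] with t h1 h2
      have hP : (0 : ℝ) < (t : ℝ) + 1 := by positivity
      have hforce : c5 * (c1 / ((t : ℝ) + 1) ^ δ1) = K * (a t / 2) * ((t : ℝ) + 1) ^ (-γ) := by
        rw [show δ1 = δ2 + γ by ring, Real.rpow_add hP, Real.rpow_neg hP.le]
        simp only [ha, K]
        field_simp
      have : 0 ≤ 2 * γ / ((t : ℝ) + 1) := by positivity
      rw [hrec t, hforce, show 1 - a t + b t = 1 - (a - b) t by simp only [Pi.sub_apply]; ring]
      refine abs_one_sub_mul_add_le (by simp only [Pi.sub_apply]; linarith [hb0 t])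
        (by have := ha0 t; positivity) ?_
      gcongr
      simp only [Pi.sub_apply]; linarith)
  refine IsBigO.of_bound M (hM.mono fun t ht => ?_)
  rwa [Real.norm_eq_abs, Real.norm_of_nonneg (by positivity)]

theorem stmt_3_general (c1 c2 c3 c4 c5 δ1 δ2 : ℝ)
    (hc1 : 0 < c1) (hc2 : 0 < c2) (hc3 : 0 < c3) (hc4 : 0 < c4) (hc5 : 0 < c5)
    (hδ2 : 0 < δ2) (hδ21 : δ2 < δ1) (hδ1 : δ1 < 1)
    (v : ℕ → ℝ)
    (hrec : ∀ t : ℕ, v (t + 1) =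
      (1 - c3 * (c2 / ((t : ℝ) + 1) ^ δ2) + c4 * (c1 / ((t : ℝ) + 1) ^ δ1)) * v t
        + c5 * (c1 / ((t : ℝ) + 1) ^ δ1))
    (δ0 : ℝ) (hδ0' : δ0 < δ1 - δ2) :
    Tendsto (fun t : ℕ => ((t : ℝ) + 1) ^ δ0 * v t) atTop (nhds 0) := by
  have hO := (isBigO_refl (fun t : ℕ => ((t : ℝ) + 1) ^ δ0) atTop).mul
    (isBigO_rpow_neg_of_recurrence hc1 hc2 hc3 hc4 hc5 hδ2 hδ21 hδ1 hrec)
  refine hO.trans_tendsto (((tendsto_rpow_neg_atTop (sub_pos.2 hδ0')).comp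
    tendsto_natCast_add_one_atTop).congr fun t => ?_)
  rw [Function.comp_apply, ← Real.rpow_add (by positivity)]
  ring_nf

theorem stmt_3 (c1 c2 c3 c4 c5 δ1 δ2 : ℝ)
    (hc1 : 0 < c1) (hc2 : 0 < c2) (hc3 : 0 < c3) (hc4 : 0 < c4) (hc5 : 0 < c5)
    (hδ2 : 0 < δ2) (hδ21 : δ2 < δ1) (hδ1 : δ1 < 1)
    (v : ℕ → ℝ)
    (hrec : ∀ t : ℕ, v (t + 1) =
      (1 - c3 * (c2 / ((t : ℝ) + 1) ^ δ2) + c4 * (c1 / ((t : ℝ) + 1) ^ δ1)) * v t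
        + c5 * (c1 / ((t : ℝ) + 1) ^ δ1))
    (δ0 : ℝ) (hδ0 : 0 ≤ δ0) (hδ0' : δ0 < δ1 - δ2) :
    Tendsto (fun t : ℕ => ((t : ℝ) + 1) ^ δ0 * v t) atTop (nhds 0) :=
  stmt_3_general c1 c2 c3 c4 c5 δ1 δ2 hc1 hc2 hc3 hc4 hc5 hδ2 hδ21 hδ1 v hrec δ0 hδ0'
end

section
/- Consider the coupled scalar recursions $v_{t+1} = (1 - c_3 r_1(t)) v_t + c_4 r_1(t) w_t$ and $w_{t+1} = (1 - c_5 r_2(t) + c_6 r_1(t)) w_t + c_7 r_1(t) v_t$, where $r_1(t) = c_1/(t+1)^{\delta_1}$, $r_2(t) = c_2/(t+1)^{\delta_2}$, $c_1,\dots,c_7 > 0$, and $0 < \delta_2 < \delta_1 < 1$. Then $\sup_{t \ge 0} |v_t| < \infty$ and $\sup_{t \ge 0} |w_t| < \infty$ for all initial conditions $v_0, w_0 \in \mathbb{R}$. -/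
/-!
Track the weighted norm `uₜ = max (c₃ |vₜ|) (c₄ |wₜ|)`. For these weights a step of the recursion is
a linear map whose weighted row sums are `1` in the first row (the `c₃ r₁` terms cancel) and
`1 - c₅ r₂ + (c₆ + c₄ c₇ / c₃) r₁` in the second. Since `δ₂ < δ₁`, the damping `c₅ r₂` eventually
dominates the growth `(c₆ + c₄ c₇ / c₃) r₁`, and both step sizes eventually become small enough
to keep the diagonal entries nonnegative; so `u` is eventually non-increasing, hence bounded.
-/

open Filter

theorem bddAbove_range_of_eventually_succ_le {α : Type*} [SemilatticeSup α] {u : ℕ → α}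
    (h : ∀ᶠ t in atTop, u (t + 1) ≤ u t) : BddAbove (Set.range u) := by
  have : Nonempty α := ⟨u 0⟩
  obtain ⟨T, hT⟩ := eventually_atTop.1 h
  have hanti : AntitoneOn u {t | T ≤ t} := antitoneOn_nat_Ici_of_succ_le hT
  obtain ⟨M, hM⟩ := ((Set.finite_Iic T).image u).bddAbove
  refine ⟨M, Set.forall_mem_range.2 fun t => ?_⟩
  rcases le_total t T with htT | hTt
  · exact hM ⟨t, htT, rfl⟩
  · exact (hanti (le_refl T) hTt hTt).trans (hM ⟨T, le_refl T, rfl⟩)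

theorem eventually_div_rpow_le_div_rpow_atTop {a b δ₁ δ₂ : ℝ} (hb : 0 < b) (hδ : δ₂ < δ₁) :
    ∀ᶠ x : ℝ in atTop, a / x ^ δ₁ ≤ b / x ^ δ₂ := by
  filter_upwards [(tendsto_rpow_atTop (sub_pos.2 hδ)).eventually_ge_atTop (a / b),
    eventually_gt_atTop 0] with x hx hx0
  have hsplit : x ^ δ₁ = x ^ (δ₁ - δ₂) * x ^ δ₂ := by
    rw [← Real.rpow_add hx0, sub_add_cancel]
  rw [div_le_div_iff₀ (Real.rpow_pos_of_pos hx0 _) (Real.rpow_pos_of_pos hx0 _), hsplit]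
  calc a * x ^ δ₂ = a / b * b * x ^ δ₂ := by field_simp
    _ ≤ x ^ (δ₁ - δ₂) * b * x ^ δ₂ := by gcongr
    _ = b * (x ^ (δ₁ - δ₂) * x ^ δ₂) := by ring

theorem max_mul_abs_linear_le {a b c d p q x y : ℝ} (hp : 0 < p) (hq : 0 < q)
    (hrow₁ : |a| * q + p * |b| ≤ q) (hrow₂ : q * |c| + |d| * p ≤ p) :
    max (p * |a * x + b * y|) (q * |c * x + d * y|) ≤ max (p * |x|) (q * |y|) := by
  set m := max (p * |x|) (q * |y|)
  have hx : p * |x| ≤ m := le_max_left _ _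
  have hy : q * |y| ≤ m := le_max_right _ _
  have hm : 0 ≤ m := (mul_nonneg hp.le (abs_nonneg x)).trans hx
  have habs₁ : |a * x + b * y| ≤ |a| * |x| + |b| * |y| := by
    simpa only [abs_mul] using abs_add_le (a * x) (b * y)
  have habs₂ : |c * x + d * y| ≤ |c| * |x| + |d| * |y| := by
    simpa only [abs_mul] using abs_add_le (c * x) (d * y)
  refine max_le (le_of_mul_le_mul_left ?_ hq) (le_of_mul_le_mul_left ?_ hp)
  · calc q * (p * |a * x + b * y|) ≤ q * (p * (|a| * |x| + |b| * |y|)) := by gcongr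
      _ = |a| * q * (p * |x|) + p * |b| * (q * |y|) := by ring
      _ ≤ |a| * q * m + p * |b| * m := by gcongr
      _ ≤ q * m := by nlinarith
  · calc p * (q * |c * x + d * y|) ≤ p * (q * (|c| * |x| + |d| * |y|)) := by gcongr
      _ = q * |c| * (p * |x|) + |d| * p * (q * |y|) := by ring
      _ ≤ q * |c| * m + |d| * p * m := by gcongr
      _ ≤ p * m := by nlinarith

theorem max_mul_abs_step_le {c₃ c₄ c₅ c₆ c₇ r₁ r₂ v w : ℝ}
    (hc₃ : 0 < c₃) (hc₄ : 0 < c₄) (hc₆ : 0 ≤ c₆) (hc₇ : 0 ≤ c₇) (hr₁ : 0 ≤ r₁)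
    (hstep₁ : c₃ * r₁ ≤ 1) (hstep₂ : c₅ * r₂ ≤ 1)
    (hdamp : (c₃ * c₆ + c₄ * c₇) * r₁ ≤ c₃ * (c₅ * r₂)) :
    max (c₃ * |(1 - c₃ * r₁) * v + c₄ * r₁ * w|)
        (c₄ * |(1 - c₅ * r₂ + c₆ * r₁) * w + c₇ * r₁ * v|) ≤
      max (c₃ * |v|) (c₄ * |w|) := by
  rw [add_comm ((1 - c₅ * r₂ + c₆ * r₁) * w)]
  apply max_mul_abs_linear_le hc₃ hc₄
  · rw [abs_of_nonneg (by linarith), abs_of_nonneg (by positivity)]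
    linarith
  · rw [abs_of_nonneg (by positivity), abs_of_nonneg (by nlinarith)]
    linarith

theorem stmt_4_general (c1 c2 c3 c4 c5 c6 c7 δ1 δ2 : ℝ)
    (hc1 : 0 < c1) (hc2 : 0 < c2) (hc3 : 0 < c3) (hc4 : 0 < c4)
    (hc5 : 0 < c5) (hc6 : 0 < c6) (hc7 : 0 < c7)
    (hδ2 : 0 < δ2) (hδ21 : δ2 < δ1)
    (v w : ℕ → ℝ)
    (hrecv : ∀ t : ℕ, v (t + 1) =
      (1 - c3 * (c1 / ((t : ℝ) + 1) ^ δ1)) * v t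
        + c4 * (c1 / ((t : ℝ) + 1) ^ δ1) * w t)
    (hrecw : ∀ t : ℕ, w (t + 1) =
      (1 - c5 * (c2 / ((t : ℝ) + 1) ^ δ2) + c6 * (c1 / ((t : ℝ) + 1) ^ δ1)) * w t
        + c7 * (c1 / ((t : ℝ) + 1) ^ δ1) * v t) :
    (∃ Bv : ℝ, ∀ t : ℕ, |v t| ≤ Bv) ∧ (∃ Bw : ℝ, ∀ t : ℕ, |w t| ≤ Bw) := by
  have hshift : Tendsto (fun t : ℕ => (t : ℝ) + 1) atTop atTop :=
    tendsto_atTop_add_const_right _ 1 tendsto_natCast_atTop_atTop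
  have eventually_rates {a b δ₁ δ₂ : ℝ} (hb : 0 < b) (hδ : δ₂ < δ₁) :
      ∀ᶠ t : ℕ in atTop, a / ((t : ℝ) + 1) ^ δ₁ ≤ b / ((t : ℝ) + 1) ^ δ₂ :=
    hshift.eventually (eventually_div_rpow_le_div_rpow_atTop hb hδ)
  -- Comparing with `1 / x ^ 0 = 1`: the step sizes `c₃ r₁` and `c₅ r₂` eventually drop below `1`.
  have hstep₁ := eventually_rates (a := c3 * c1) zero_lt_one (hδ2.trans hδ21)
  have hstep₂ := eventually_rates (a := c5 * c2) zero_lt_one hδ2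
  have hdamp := eventually_rates (a := (c3 * c6 + c4 * c7) * c1)
    (mul_pos hc3 (mul_pos hc5 hc2)) hδ21
  obtain ⟨M, hM⟩ : BddAbove (Set.range fun t => max (c3 * |v t|) (c4 * |w t|)) := by
    refine bddAbove_range_of_eventually_succ_le ?_
    filter_upwards [hstep₁, hstep₂, hdamp] with t h₁ h₂ h₃
    simp only [Real.rpow_zero, div_one, mul_div_assoc] at h₁ h₂ h₃
    rw [hrecv, hrecw]
    exact max_mul_abs_step_le hc3 hc4 hc6.le hc7.le (by positivity) h₁ h₂ h₃
  have hbound (t : ℕ) : max (c3 * |v t|) (c4 * |w t|) ≤ M := hM ⟨t, rfl⟩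
  refine ⟨⟨M / c3, fun t => ?_⟩, ⟨M / c4, fun t => ?_⟩⟩
  · rw [le_div_iff₀' hc3]; exact (le_max_left _ _).trans (hbound t)
  · rw [le_div_iff₀' hc4]; exact (le_max_right _ _).trans (hbound t)

theorem stmt_4 (c1 c2 c3 c4 c5 c6 c7 δ1 δ2 : ℝ)
    (hc1 : 0 < c1) (hc2 : 0 < c2) (hc3 : 0 < c3) (hc4 : 0 < c4)
    (hc5 : 0 < c5) (hc6 : 0 < c6) (hc7 : 0 < c7)
    (hδ2 : 0 < δ2) (hδ21 : δ2 < δ1) (hδ1 : δ1 < 1)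
    (v w : ℕ → ℝ)
    (hrecv : ∀ t : ℕ, v (t + 1) =
      (1 - c3 * (c1 / ((t : ℝ) + 1) ^ δ1)) * v t
        + c4 * (c1 / ((t : ℝ) + 1) ^ δ1) * w t)
    (hrecw : ∀ t : ℕ, w (t + 1) =
      (1 - c5 * (c2 / ((t : ℝ) + 1) ^ δ2) + c6 * (c1 / ((t : ℝ) + 1) ^ δ1)) * w t
        + c7 * (c1 / ((t : ℝ) + 1) ^ δ1) * v t) :
    (∃ Bv : ℝ, ∀ t : ℕ, |v t| ≤ Bv) ∧ (∃ Bw : ℝ, ∀ t : ℕ, |w t| ≤ Bw) :=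
  stmt_4_general c1 c2 c3 c4 c5 c6 c7 δ1 δ2 hc1 hc2 hc3 hc4 hc5 hc6 hc7 hδ2 hδ21 v w hrecv hrecw
end

section
/- Consider the coupled scalar recursions $v_{t+1} = (1 - c_3 r_1(t)) v_t + c_4 r_1(t) w_t$ and $w_{t+1} = (1 - c_5 r_2(t) + c_6 r_1(t)) w_t + c_7 r_1(t) v_t$, where $r_1(t) = c_1/(t+1)^{\delta_1}$, $r_2(t) = c_2/(t+1)^{\delta_2}$, $c_1,\dots,c_7 > 0$, and $0 < \delta_2 < \delta_1 < 1$. Then $\lim_{t\to\infty} (t+1)^{\delta_0} v_t = 0$ and $\lim_{t\to\infty} (t+1)^{\delta_0} w_t = 0$ for all $0 \le \delta_0 < \delta_1 - \delta_2$ and all initial conditions $v_0, w_0 \in \mathbb{R}$. -/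
/-!
For every `δ ≥ 1`, the pair `A t = (t + 1)⁻ᵟ`, `B t = K (t + 1)⁻ᵟ` with `K = c₃ / (2 c₄)` is
eventually a supersolution of the system obtained by replacing each coefficient with its absolute
value. Bernoulli's inequality gives `A (t + 1) ≥ (1 - δ / (t + 1)) A t`, and the loss `δ / (t + 1)`
is dominated by the net damping `c₃ r₁ / 2` of the first equation (as `δ₁ < 1`) and, in the second,
together with the coupling `c₇ r₁ / K`, by the damping `c₅ r₂ / 2` (as `δ₂ < δ₁ < 1`). Comparison
by induction yields `v, w = O((t + 1)⁻ᵟ)`, and it remains to take `δ > δ₀`.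
-/

open Filter Asymptotics Topology

theorem one_sub_div_div_rpow_le {p x : ℝ} (hp : 1 ≤ p) (hx : 0 < x) :
    (1 - p / x) / x ^ p ≤ 1 / (x + 1) ^ p := by
  have hx1 : 0 < x + 1 := by linarith
  have bernoulli : 1 + p * (-1 / (x + 1)) ≤ (1 + -1 / (x + 1)) ^ p :=
    one_add_mul_self_le_rpow_one_add
      (by rw [neg_div, neg_le_neg_iff, div_le_one hx1]; linarith) hp
  have hbase : 1 + -1 / (x + 1) = x / (x + 1) := by field_simp; ring
  rw [hbase, Real.div_rpow hx.le hx1.le] at bernoulli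
  have hpx : p / (x + 1) ≤ p / x := by gcongr; linarith
  rw [div_le_iff₀ (Real.rpow_pos_of_pos hx p), one_div_mul_eq_div]
  calc 1 - p / x ≤ 1 + p * (-1 / (x + 1)) := by
        have : p * (-1 / (x + 1)) = -(p / (x + 1)) := by ring
        linarith
    _ ≤ x ^ p / (x + 1) ^ p := bernoulli

theorem abs_mul_add_mul_le {p q x y X Y Z M : ℝ} (hM : 0 ≤ M) (hx : |x| ≤ M * X)
    (hy : |y| ≤ M * Y) (hZ : |p| * X + |q| * Y ≤ Z) : |p * x + q * y| ≤ M * Z :=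
  calc |p * x + q * y| ≤ |p| * |x| + |q| * |y| := by
        rw [← abs_mul, ← abs_mul]; exact abs_add_le _ _
    _ ≤ |p| * (M * X) + |q| * (M * Y) := by gcongr
    _ = M * (|p| * X + |q| * Y) := by ring
    _ ≤ M * Z := by gcongr

theorem isBigO_of_supersolution {v w P Q R S A B : ℕ → ℝ}
    (hv : ∀ t, v (t + 1) = P t * v t + Q t * w t)
    (hw : ∀ t, w (t + 1) = R t * w t + S t * v t)
    (hA : ∀ᶠ t in atTop, 0 < A t) (hB : ∀ᶠ t in atTop, 0 < B t)
    (hsupA : ∀ᶠ t in atTop, |P t| * A t + |Q t| * B t ≤ A (t + 1))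
    (hsupB : ∀ᶠ t in atTop, |R t| * B t + |S t| * A t ≤ B (t + 1)) :
    v =O[atTop] A ∧ w =O[atTop] B := by
  obtain ⟨T, hT⟩ := eventually_atTop.mp (hA.and (hB.and (hsupA.and hsupB)))
  obtain ⟨hAT, hBT, -⟩ := hT T le_rfl
  set M := max (|v T| / A T) (|w T| / B T)
  have hM : 0 ≤ M := le_max_of_le_left (by positivity)
  have bound : ∀ t ≥ T, |v t| ≤ M * A t ∧ |w t| ≤ M * B t := by
    intro t ht
    induction t, ht using Nat.le_induction with
    | base =>
      exact ⟨(div_le_iff₀ hAT).mp (le_max_left _ _),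
        (div_le_iff₀ hBT).mp (le_max_right _ _)⟩
    | succ t ht ih =>
      obtain ⟨-, -, hsA, hsB⟩ := hT t ht
      rw [hv, hw]
      exact ⟨abs_mul_add_mul_le hM ih.1 ih.2 hsA, abs_mul_add_mul_le hM ih.2 ih.1 hsB⟩
  refine ⟨.of_bound M ?_, .of_bound M ?_⟩ <;>
    filter_upwards [eventually_ge_atTop T, hA, hB] with t ht hAt hBt
  · rw [Real.norm_eq_abs, Real.norm_of_nonneg hAt.le]; exact (bound t ht).1
  · rw [Real.norm_eq_abs, Real.norm_of_nonneg hBt.le]; exact (bound t ht).2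

/-- `stepSize c₁ δ₁` and `stepSize c₂ δ₂` are the step sizes `r₁` and `r₂`. -/
noncomputable def stepSize (c a : ℝ) (t : ℕ) : ℝ := c / ((t : ℝ) + 1) ^ a

theorem stepSize_pos {c : ℝ} (hc : 0 < c) (a : ℝ) (t : ℕ) : 0 < stepSize c a t := by
  unfold stepSize; positivity

theorem tendsto_stepSize (c : ℝ) {a : ℝ} (ha : 0 < a) :
    Tendsto (stepSize c a) atTop (𝓝 0) :=
  tendsto_const_nhds.div_atTop <| (tendsto_rpow_atTop ha).comp <|
    tendsto_atTop_add_const_right _ 1 tendsto_natCast_atTop_atTop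

theorem stepSize_isLittleO (c : ℝ) {d a b : ℝ} (hd : d ≠ 0) (hab : a < b) :
    stepSize c b =o[atTop] stepSize d a := by
  rw [isLittleO_iff_tendsto' (Eventually.of_forall fun t h => ?_)]
  · refine (tendsto_stepSize (c / d) (sub_pos.mpr hab)).congr fun t => ?_
    have hN : (0 : ℝ) < t + 1 := by positivity
    simp only [stepSize, Real.rpow_sub hN]
    field_simp
  · exact absurd h (div_ne_zero hd (by positivity))

theorem stepSize_succ_ge {p : ℝ} (hp : 1 ≤ p) (t : ℕ) :
    (1 - p * stepSize 1 1 t) * stepSize 1 p t ≤ stepSize 1 p (t + 1) := by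
  have h := one_sub_div_div_rpow_le hp (by positivity : (0 : ℝ) < t + 1)
  simp only [stepSize, Real.rpow_one, Nat.cast_succ] at h ⊢
  convert h using 1; ring

theorem Asymptotics.IsLittleO.eventually_le_const_mul {α : Type*} {l : Filter α} {f g : α → ℝ}
    (h : f =o[l] g) {c : ℝ} (hc : 0 < c) (hg : ∀ x, 0 ≤ g x) : ∀ᶠ x in l, f x ≤ c * g x := by
  filter_upwards [h.bound hc] with x hx
  rw [Real.norm_eq_abs, Real.norm_of_nonneg (hg x)] at hx
  exact (le_abs_self _).trans hx

theorem eventually_supersolution_slow {c1 c3 c4 δ1 δ : ℝ} (hc1 : 0 < c1) (hc3 : 0 < c3)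
    (hc4 : 0 < c4) (hδ1 : 0 < δ1) (hδ1' : δ1 < 1) (hδ : 1 ≤ δ) :
    ∀ᶠ t in atTop, |1 - c3 * stepSize c1 δ1 t| * stepSize 1 δ t
      + |c4 * stepSize c1 δ1 t| * (c3 / (2 * c4) * stepSize 1 δ t) ≤ stepSize 1 δ (t + 1) := by
  have hsmall : ∀ᶠ t in atTop, c3 * stepSize c1 δ1 t < 1 :=
    ((tendsto_stepSize c1 hδ1).const_mul c3).eventually_lt_const (by rw [mul_zero]; exact one_pos)
  have hdom : ∀ᶠ t in atTop, δ * stepSize 1 1 t ≤ c3 / 2 * stepSize c1 δ1 t :=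
    ((stepSize_isLittleO 1 hc1.ne' hδ1').const_mul_left δ).eventually_le_const_mul
      (half_pos hc3) fun t => (stepSize_pos hc1 _ _).le
  filter_upwards [hsmall, hdom] with t hsmall hdom
  have hA := stepSize_pos one_pos δ t
  have hr := stepSize_pos hc1 δ1 t
  rw [abs_of_nonneg (by linarith), abs_of_nonneg (by positivity)]
  calc _ = (1 - c3 / 2 * stepSize c1 δ1 t) * stepSize 1 δ t := by field_simp; ring
    _ ≤ (1 - δ * stepSize 1 1 t) * stepSize 1 δ t := by gcongr
    _ ≤ _ := stepSize_succ_ge hδ t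

theorem eventually_supersolution_fast {c1 c2 c5 c6 c7 δ1 δ2 δ K : ℝ} (hc1 : 0 < c1)
    (hc2 : 0 < c2) (hc5 : 0 < c5) (hc6 : 0 < c6) (hc7 : 0 < c7) (hδ2 : 0 < δ2)
    (hδ21 : δ2 < δ1) (hδ1 : δ1 < 1) (hδ : 1 ≤ δ) (hK : 0 < K) :
    ∀ᶠ t in atTop, |1 - c5 * stepSize c2 δ2 t + c6 * stepSize c1 δ1 t| * (K * stepSize 1 δ t)
      + |c7 * stepSize c1 δ1 t| * stepSize 1 δ t ≤ K * stepSize 1 δ (t + 1) := by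
  have hr2 : ∀ t, 0 ≤ stepSize c2 δ2 t := fun t => (stepSize_pos hc2 _ _).le
  have hsep := stepSize_isLittleO c1 hc2.ne' hδ21
  have hsmall : ∀ᶠ t in atTop, c5 * stepSize c2 δ2 t < 1 :=
    ((tendsto_stepSize c2 hδ2).const_mul c5).eventually_lt_const (by rw [mul_zero]; exact one_pos)
  have hcross : ∀ᶠ t in atTop, c6 * stepSize c1 δ1 t ≤ c5 / 2 * stepSize c2 δ2 t :=
    (hsep.const_mul_left c6).eventually_le_const_mul (half_pos hc5) hr2
  have hdom : ∀ᶠ t in atTop,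
      K * δ * stepSize 1 1 t + c7 * stepSize c1 δ1 t ≤ c5 / 2 * K * stepSize c2 δ2 t :=
    (((stepSize_isLittleO 1 hc2.ne' (hδ21.trans hδ1)).const_mul_left (K * δ)).add
      (hsep.const_mul_left c7)).eventually_le_const_mul (by positivity) hr2
  filter_upwards [hsmall, hcross, hdom] with t hsmall hcross hdom
  have hA := stepSize_pos one_pos δ t
  have hr1 := stepSize_pos hc1 δ1 t
  have hcoef : |1 - c5 * stepSize c2 δ2 t + c6 * stepSize c1 δ1 t|
      ≤ 1 - c5 / 2 * stepSize c2 δ2 t := by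
    have : 0 ≤ c6 * stepSize c1 δ1 t := by positivity
    rw [abs_le]; constructor <;> linarith
  rw [abs_of_nonneg (by positivity : 0 ≤ c7 * stepSize c1 δ1 t)]
  calc _ ≤ (1 - c5 / 2 * stepSize c2 δ2 t) * (K * stepSize 1 δ t)
        + c7 * stepSize c1 δ1 t * stepSize 1 δ t := by gcongr
    _ = (K - c5 / 2 * K * stepSize c2 δ2 t + c7 * stepSize c1 δ1 t) * stepSize 1 δ t := by ring
    _ ≤ K * (1 - δ * stepSize 1 1 t) * stepSize 1 δ t := by gcongr; linarith
    _ ≤ K * stepSize 1 δ (t + 1) := by rw [mul_assoc]; gcongr; exact stepSize_succ_ge hδ t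

theorem stmt_5_general (c1 c2 c3 c4 c5 c6 c7 δ1 δ2 : ℝ)
    (hc1 : 0 < c1) (hc2 : 0 < c2) (hc3 : 0 < c3) (hc4 : 0 < c4)
    (hc5 : 0 < c5) (hc6 : 0 < c6) (hc7 : 0 < c7)
    (hδ2 : 0 < δ2) (hδ21 : δ2 < δ1) (hδ1 : δ1 < 1)
    (v w : ℕ → ℝ)
    (hrecv : ∀ t : ℕ, v (t + 1) =
      (1 - c3 * (c1 / ((t : ℝ) + 1) ^ δ1)) * v t
        + c4 * (c1 / ((t : ℝ) + 1) ^ δ1) * w t)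
    (hrecw : ∀ t : ℕ, w (t + 1) =
      (1 - c5 * (c2 / ((t : ℝ) + 1) ^ δ2) + c6 * (c1 / ((t : ℝ) + 1) ^ δ1)) * w t
        + c7 * (c1 / ((t : ℝ) + 1) ^ δ1) * v t)
    (δ0 : ℝ) :
    Tendsto (fun t : ℕ => ((t : ℝ) + 1) ^ δ0 * v t) atTop (nhds 0) ∧
    Tendsto (fun t : ℕ => ((t : ℝ) + 1) ^ δ0 * w t) atTop (nhds 0) := by
  set δ := |δ0| + 1
  have hδ : 1 ≤ δ := le_add_of_nonneg_left (abs_nonneg δ0)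
  obtain ⟨hvO, hwO⟩ := isBigO_of_supersolution hrecv hrecw
    (A := stepSize 1 δ) (B := fun t => c3 / (2 * c4) * stepSize 1 δ t)
    (.of_forall (stepSize_pos one_pos δ))
    (.of_forall fun t => mul_pos (by positivity) (stepSize_pos one_pos δ t))
    (eventually_supersolution_slow hc1 hc3 hc4 (hδ2.trans hδ21) hδ1 hδ)
    (eventually_supersolution_fast hc1 hc2 hc5 hc6 hc7 hδ2 hδ21 hδ1 hδ (by positivity))
  have hdecay : Tendsto (fun t : ℕ => ((t : ℝ) + 1) ^ δ0 * stepSize 1 δ t) atTop (𝓝 0) := by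
    refine (tendsto_stepSize 1 (by linarith [le_abs_self δ0] : 0 < δ - δ0)).congr fun t => ?_
    simp only [stepSize, Real.rpow_sub (by positivity : (0 : ℝ) < t + 1)]
    field_simp
  exact ⟨((isBigO_refl _ _).mul hvO).trans_tendsto hdecay,
    ((isBigO_refl _ _).mul (hwO.trans (isBigO_const_mul_self _ _ _))).trans_tendsto hdecay⟩

theorem stmt_5 (c1 c2 c3 c4 c5 c6 c7 δ1 δ2 : ℝ)
    (hc1 : 0 < c1) (hc2 : 0 < c2) (hc3 : 0 < c3) (hc4 : 0 < c4)
    (hc5 : 0 < c5) (hc6 : 0 < c6) (hc7 : 0 < c7)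
    (hδ2 : 0 < δ2) (hδ21 : δ2 < δ1) (hδ1 : δ1 < 1)
    (v w : ℕ → ℝ)
    (hrecv : ∀ t : ℕ, v (t + 1) =
      (1 - c3 * (c1 / ((t : ℝ) + 1) ^ δ1)) * v t
        + c4 * (c1 / ((t : ℝ) + 1) ^ δ1) * w t)
    (hrecw : ∀ t : ℕ, w (t + 1) =
      (1 - c5 * (c2 / ((t : ℝ) + 1) ^ δ2) + c6 * (c1 / ((t : ℝ) + 1) ^ δ1)) * w t
        + c7 * (c1 / ((t : ℝ) + 1) ^ δ1) * v t)
    (δ0 : ℝ) (hδ0 : 0 ≤ δ0) (hδ0' : δ0 < δ1 - δ2) :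
    Tendsto (fun t : ℕ => ((t : ℝ) + 1) ^ δ0 * v t) atTop (nhds 0) ∧
    Tendsto (fun t : ℕ => ((t : ℝ) + 1) ^ δ0 * w t) atTop (nhds 0) :=
  stmt_5_general c1 c2 c3 c4 c5 c6 c7 δ1 δ2 hc1 hc2 hc3 hc4 hc5 hc6 hc7 hδ2 hδ21 hδ1 v w hrecv hrecw
    δ0
end

section
/- Consider the coupled recursions $\gamma_{1,t+1} = (1 - \beta_t \lambda_2 + \kappa_1 \alpha_t)\gamma_{1,t} + \kappa_2 \alpha_t \gamma_{2,t}$ and $\gamma_{2,t+1} = \alpha_t \gamma_{1,t} + (1 - \alpha_t(1-2s))\gamma_{2,t}$, where $\alpha_t = a/(t+1)^{\tau_1}$, $\beta_t = b/(t+1)^{\tau_2}$, $a, b, \lambda_2, \kappa_1, \kappa_2 > 0$, $0 < s < 1/2$, and $0 < \tau_2 < \tau_1 < 1$, with initial conditions $\gamma_{1,0} = 0$ and $\gamma_{2,0} = \eta > 0$. Then $\lim_{t\to\infty} (t+1)^{\tau_0} \gamma_{i,t} = 0$ for $i = 1, 2$ and all $0 \le \tau_0 < \tau_1 - \tau_2$.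 -/
/-!
With `ε κ₂ = (1 - 2s)/2`, the weighted norm `W t = ε |γ₁ t| + |γ₂ t|` is a Lyapunov function:
since `β_t` dominates `α_t`, the fast damping `β_t λ₂` of `γ₁` absorbs both the growth `κ₁ α_t` and
the coupling into `γ₂`, so eventually `W (t+1) ≤ (1 - (1 - 2s)/2 · α_t) W t`. Because `∑ α_t` grows
like `t^(1 - τ₁)`, this gives `W t ≤ C exp (-c t^(1 - τ₁))`, which beats every power of `t`.
-/


open Filter Topology Finset Real

lemma abs_mul_add_mul_le_s14 {p q : ℝ} (hp : 0 ≤ p) (hq : 0 ≤ q) (x y : ℝ) :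
    |p * x + q * y| ≤ p * |x| + q * |y| :=
  (abs_add_le _ _).trans_eq <| by rw [abs_mul, abs_mul, abs_of_nonneg hp, abs_of_nonneg hq]

section CoupledSystem

variable {κ₁ κ₂ lam σ ε : ℝ}

lemma coupled_lyapunov_step (hκ₁ : 0 ≤ κ₁) (hκ₂ : 0 ≤ κ₂) (hε : 0 ≤ ε)
    (hεκ₂ : ε * κ₂ = σ / 2) {r₁ r₂ : ℝ} (hr₁ : 0 ≤ r₁) (hr₂ : r₂ * lam ≤ 1)
    (hr₁σ : r₁ * σ ≤ 1) (hdom : r₁ * (1 + ε * (κ₁ + σ / 2)) ≤ ε * (r₂ * lam)) (x y : ℝ) :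
    ε * |(1 - r₂ * lam + κ₁ * r₁) * x + κ₂ * r₁ * y| + |r₁ * x + (1 - r₁ * σ) * y| ≤
      (1 - σ / 2 * r₁) * (ε * |x| + |y|) := by
  have hx := abs_mul_add_mul_le_s14 (p := 1 - r₂ * lam + κ₁ * r₁) (q := κ₂ * r₁)
    (by nlinarith [mul_nonneg hκ₁ hr₁]) (by positivity) x y
  have hy := abs_mul_add_mul_le_s14 (p := r₁) (q := 1 - r₁ * σ) hr₁ (by linarith) x y
  have hcoef : ε * (1 - r₂ * lam + κ₁ * r₁) + r₁ ≤ ε * (1 - σ / 2 * r₁) := by nlinarith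
  calc ε * |(1 - r₂ * lam + κ₁ * r₁) * x + κ₂ * r₁ * y| + |r₁ * x + (1 - r₁ * σ) * y|
      ≤ (ε * (1 - r₂ * lam + κ₁ * r₁) + r₁) * |x| + (ε * κ₂ * r₁ + (1 - r₁ * σ)) * |y| := by
        nlinarith [mul_le_mul_of_nonneg_left hx hε]
    _ ≤ ε * (1 - σ / 2 * r₁) * |x| + (1 - σ / 2 * r₁) * |y| := by
        rw [hεκ₂]
        nlinarith [mul_le_mul_of_nonneg_right hcoef (abs_nonneg x)]
    _ = (1 - σ / 2 * r₁) * (ε * |x| + |y|) := by ring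

lemma eventually_coupled_lyapunov_contraction (hκ₁ : 0 ≤ κ₁) (hκ₂ : 0 ≤ κ₂) (hlam : 0 < lam)
    (hσ : 0 < σ) (hε : 0 < ε) (hεκ₂ : ε * κ₂ = σ / 2) {r₁ r₂ x y : ℕ → ℝ}
    (hr₁ : ∀ t, 0 ≤ r₁ t) (hr₂ : ∀ t, 0 ≤ r₂ t) (hr₂_lim : Tendsto r₂ atTop (𝓝 0))
    (hr₁₂ : r₁ =o[atTop] r₂)
    (hx : ∀ t, x (t + 1) = (1 - r₂ t * lam + κ₁ * r₁ t) * x t + κ₂ * r₁ t * y t)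
    (hy : ∀ t, y (t + 1) = r₁ t * x t + (1 - r₁ t * σ) * y t) :
    ∀ᶠ t in atTop, ε * |x (t + 1)| + |y (t + 1)| ≤ (1 - σ / 2 * r₁ t) * (ε * |x t| + |y t|) := by
  have hr₁_lim : Tendsto r₁ atTop (𝓝 0) := hr₁₂.trans_tendsto hr₂_lim
  filter_upwards [(hr₂_lim.mul_const lam).eventually (eventually_le_nhds (b := 1) (by simp)),
    (hr₁_lim.mul_const σ).eventually (eventually_le_nhds (b := 1) (by simp)),
    hr₁₂.def (c := ε * lam / (1 + ε * (κ₁ + σ / 2))) (by positivity)] with t h₂ h₁ hdom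
  rw [hx, hy]
  refine coupled_lyapunov_step hκ₁ hκ₂ hε.le hεκ₂ (hr₁ t) h₂ h₁ ?_ _ _
  rw [norm_of_nonneg (hr₁ t), norm_of_nonneg (hr₂ t)] at hdom
  calc r₁ t * (1 + ε * (κ₁ + σ / 2))
      ≤ ε * lam / (1 + ε * (κ₁ + σ / 2)) * r₂ t * (1 + ε * (κ₁ + σ / 2)) := by gcongr
    _ = ε * (r₂ t * lam) := by field_simp

end CoupledSystem

lemma tendsto_const_div_natCast_add_one_rpow (c : ℝ) {τ : ℝ} (hτ : 0 < τ) :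
    Tendsto (fun t : ℕ => c / ((t : ℝ) + 1) ^ τ) atTop (𝓝 0) :=
  tendsto_const_nhds.div_atTop <| (tendsto_rpow_atTop hτ).comp <|
    tendsto_atTop_add_const_right _ 1 tendsto_natCast_atTop_atTop

lemma isLittleO_const_div_natCast_add_one_rpow {a b τ₁ τ₂ : ℝ} (hb : b ≠ 0) (hτ : τ₂ < τ₁) :
    (fun t : ℕ => a / ((t : ℝ) + 1) ^ τ₁) =o[atTop] fun t : ℕ => b / ((t : ℝ) + 1) ^ τ₂ := by
  refine (Asymptotics.isLittleO_iff_tendsto fun t h => ?_).mpr <|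
    (tendsto_const_div_natCast_add_one_rpow (a / b) (sub_pos.mpr hτ)).congr fun t => ?_
  · exact absurd h (div_ne_zero hb (by positivity))
  · have ht : (0 : ℝ) < t + 1 := by positivity
    rw [rpow_sub ht]
    field_simp

lemma tendsto_natCast_add_one_rpow_mul_exp_neg_mul_rpow (p : ℝ) {θ δ : ℝ} (hθ : 0 < θ)
    (hδ : 0 < δ) :
    Tendsto (fun n : ℕ => ((n : ℝ) + 1) ^ p * exp (-δ * ((n : ℝ) + 1) ^ θ)) atTop (𝓝 0) := by
  have hn : Tendsto (fun n : ℕ => (n : ℝ) + 1) atTop atTop :=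
    tendsto_atTop_add_const_right _ 1 tendsto_natCast_atTop_atTop
  refine ((tendsto_rpow_mul_exp_neg_mul_atTop_nhds_zero (p / θ) δ hδ).comp
    ((tendsto_rpow_atTop hθ).comp hn)).congr fun n => ?_
  simp only [Function.comp, ← rpow_mul (by positivity : (0 : ℝ) ≤ n + 1),
    mul_div_cancel₀ p hθ.ne']

lemma le_mul_exp_neg_sum_of_le_one_sub_mul {W r : ℕ → ℝ} {T : ℕ} (hW : ∀ t, 0 ≤ W t)
    (hstep : ∀ t ≥ T, W (t + 1) ≤ (1 - r t) * W t) :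
    ∀ n ≥ T, W n ≤ W T * exp (-∑ k ∈ Ico T n, r k) := by
  intro n hn
  induction n, hn using Nat.le_induction with
  | base => simp
  | succ n hn ih =>
    calc W (n + 1) ≤ (1 - r n) * W n := hstep n hn
      _ ≤ exp (-r n) * W n := by
          gcongr
          · exact hW n
          · linarith [add_one_le_exp (-r n)]
      _ ≤ exp (-r n) * (W T * exp (-∑ k ∈ Ico T n, r k)) := by gcongr
      _ = W T * exp (-∑ k ∈ Ico T (n + 1), r k) := by
          rw [sum_Ico_succ_top hn, neg_add, exp_add]
          ring

lemma mul_rpow_one_sub_le_sum_Ico_div_rpow {A τ : ℝ} (hA : 0 ≤ A) (hτ : 0 ≤ τ) {T n : ℕ}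
    (hn : 2 * T + 1 ≤ n) :
    A / 2 * ((n : ℝ) + 1) ^ (1 - τ) ≤ ∑ k ∈ Ico T n, A / ((k : ℝ) + 1) ^ τ := by
  have hn₀ : (0 : ℝ) < n + 1 := by positivity
  have hterm : ∀ k ∈ Ico T n, A / ((n : ℝ) + 1) ^ τ ≤ A / ((k : ℝ) + 1) ^ τ := by
    intro k hk
    have : (k : ℝ) ≤ n := by exact_mod_cast (mem_Ico.mp hk).2.le
    gcongr
  have hcard : ((n : ℝ) + 1) / 2 ≤ ((n - T : ℕ) : ℝ) := by
    rw [Nat.cast_sub (by omega)]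
    have : ((2 * T + 1 : ℕ) : ℝ) ≤ n := by exact_mod_cast hn
    push_cast at this
    linarith
  calc A / 2 * ((n : ℝ) + 1) ^ (1 - τ) = ((n : ℝ) + 1) / 2 * (A / ((n : ℝ) + 1) ^ τ) := by
        rw [rpow_sub hn₀, rpow_one]
        ring
    _ ≤ ((n - T : ℕ) : ℝ) * (A / ((n : ℝ) + 1) ^ τ) := by gcongr
    _ ≤ ∑ k ∈ Ico T n, A / ((k : ℝ) + 1) ^ τ := by
        simpa [nsmul_eq_mul] using card_nsmul_le_sum _ _ _ hterm

theorem tendsto_natCast_add_one_rpow_mul_of_contraction {W : ℕ → ℝ} {A τ : ℝ} (hA : 0 < A)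
    (hτ₀ : 0 ≤ τ) (hτ₁ : τ < 1) (hW : ∀ t, 0 ≤ W t)
    (hstep : ∀ᶠ t : ℕ in atTop, W (t + 1) ≤ (1 - A / ((t : ℝ) + 1) ^ τ) * W t) (p : ℝ) :
    Tendsto (fun n : ℕ => ((n : ℝ) + 1) ^ p * W n) atTop (𝓝 0) := by
  obtain ⟨T, hT⟩ := eventually_atTop.mp hstep
  have hbound : ∀ n ≥ 2 * T + 1, ((n : ℝ) + 1) ^ p * W n ≤
      W T * (((n : ℝ) + 1) ^ p * exp (-(A / 2) * ((n : ℝ) + 1) ^ (1 - τ))) := by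
    intro n hn
    have hsum := mul_rpow_one_sub_le_sum_Ico_div_rpow hA.le hτ₀ hn
    calc ((n : ℝ) + 1) ^ p * W n
        ≤ ((n : ℝ) + 1) ^ p * (W T * exp (-∑ k ∈ Ico T n, A / ((k : ℝ) + 1) ^ τ)) := by
          gcongr
          exact le_mul_exp_neg_sum_of_le_one_sub_mul hW hT n (by omega)
      _ ≤ ((n : ℝ) + 1) ^ p * (W T * exp (-(A / 2) * ((n : ℝ) + 1) ^ (1 - τ))) := by
          gcongr
          · exact hW T
          · linarith
      _ = _ := by ring
  have hlim := (tendsto_natCast_add_one_rpow_mul_exp_neg_mul_rpow p (sub_pos.mpr hτ₁)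
    (half_pos hA)).const_mul (W T)
  rw [mul_zero] at hlim
  refine squeeze_zero' (Eventually.of_forall fun n => by have := hW n; positivity) ?_ hlim
  filter_upwards [eventually_ge_atTop (2 * T + 1)] with n hn
  exact hbound n hn

theorem stmt_14_general (a b lam2 κ1 κ2 s τ1 τ2 : ℝ)
    (ha : 0 < a) (hb : 0 < b) (hlam2 : 0 < lam2) (hκ1 : 0 < κ1) (hκ2 : 0 < κ2)
    (hs' : s < 1 / 2)
    (hτ2 : 0 < τ2) (hτ21 : τ2 < τ1) (hτ1 : τ1 < 1)
    (γ1 γ2 : ℕ → ℝ)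
    (hrec1 : ∀ t : ℕ, γ1 (t + 1) =
      (1 - (b / ((t : ℝ) + 1) ^ τ2) * lam2 + κ1 * (a / ((t : ℝ) + 1) ^ τ1)) * γ1 t
        + κ2 * (a / ((t : ℝ) + 1) ^ τ1) * γ2 t)
    (hrec2 : ∀ t : ℕ, γ2 (t + 1) =
      (a / ((t : ℝ) + 1) ^ τ1) * γ1 t
        + (1 - (a / ((t : ℝ) + 1) ^ τ1) * (1 - 2 * s)) * γ2 t)
    (τ0 : ℝ) :
    Tendsto (fun t : ℕ => ((t : ℝ) + 1) ^ τ0 * γ1 t) atTop (nhds 0) ∧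
    Tendsto (fun t : ℕ => ((t : ℝ) + 1) ^ τ0 * γ2 t) atTop (nhds 0) := by
  set ε := (1 - 2 * s) / (2 * κ2)
  have hσ : 0 < 1 - 2 * s := by linarith
  have hε : 0 < ε := by positivity
  have hcontr := eventually_coupled_lyapunov_contraction hκ1.le hκ2.le hlam2 hσ hε
    (by simp only [ε]; field_simp) (fun t => by positivity) (fun t => by positivity)
    (tendsto_const_div_natCast_add_one_rpow b hτ2)
    (isLittleO_const_div_natCast_add_one_rpow hb.ne' hτ21) hrec1 hrec2
  simp only [← mul_div_assoc] at hcontr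
  have hW := tendsto_natCast_add_one_rpow_mul_of_contraction (W := fun t => ε * |γ1 t| + |γ2 t|)
    (by positivity) (hτ2.le.trans hτ21.le) hτ1 (fun t => by positivity) hcontr τ0
  constructor
  · refine squeeze_zero_norm (fun n => ?_) (by simpa using hW.const_mul ε⁻¹)
    rw [norm_mul, norm_of_nonneg (by positivity), norm_eq_abs, mul_left_comm]
    refine mul_le_mul_of_nonneg_left ?_ (by positivity)
    rw [le_inv_mul_iff₀ hε]
    exact le_add_of_nonneg_right (abs_nonneg _)
  · refine squeeze_zero_norm (fun n => ?_) hW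
    rw [norm_mul, norm_of_nonneg (by positivity), norm_eq_abs]
    gcongr
    exact le_add_of_nonneg_left (by positivity)

theorem stmt_14 (a b lam2 κ1 κ2 s η τ1 τ2 : ℝ)
    (ha : 0 < a) (hb : 0 < b) (hlam2 : 0 < lam2) (hκ1 : 0 < κ1) (hκ2 : 0 < κ2)
    (hs : 0 < s) (hs' : s < 1 / 2) (hη : 0 < η)
    (hτ2 : 0 < τ2) (hτ21 : τ2 < τ1) (hτ1 : τ1 < 1)
    (γ1 γ2 : ℕ → ℝ)
    (h10 : γ1 0 = 0) (h20 : γ2 0 = η)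
    (hrec1 : ∀ t : ℕ, γ1 (t + 1) =
      (1 - (b / ((t : ℝ) + 1) ^ τ2) * lam2 + κ1 * (a / ((t : ℝ) + 1) ^ τ1)) * γ1 t
        + κ2 * (a / ((t : ℝ) + 1) ^ τ1) * γ2 t)
    (hrec2 : ∀ t : ℕ, γ2 (t + 1) =
      (a / ((t : ℝ) + 1) ^ τ1) * γ1 t
        + (1 - (a / ((t : ℝ) + 1) ^ τ1) * (1 - 2 * s)) * γ2 t)
    (τ0 : ℝ) (hτ0 : 0 ≤ τ0) (hτ0' : τ0 < τ1 - τ2) :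
    Tendsto (fun t : ℕ => ((t : ℝ) + 1) ^ τ0 * γ1 t) atTop (nhds 0) ∧
    Tendsto (fun t : ℕ => ((t : ℝ) + 1) ^ τ0 * γ2 t) atTop (nhds 0) :=
  stmt_14_general a b lam2 κ1 κ2 s τ1 τ2 ha hb hlam2 hκ1 hκ2 hs' hτ2 hτ21 hτ1 γ1 γ2 hrec1 hrec2 τ0
end
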